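/- arXiv:2009.14580 — 3 statements merged into one kernel-verified Lean document; each statement's English description precedes it below -/
import Mathlib

section
/- For the entropy production rate Σ̇(t) = [σ₀E₀² sin(ω₀t)/(1+(ω₀τ)²)]·[ω₀τ e^{-t/τ} − ω₀τ cos(ω₀t) + sin(ω₀t)] with σ₀, E₀, ω₀, τ > 0, there exists a time t > 0 at which Σ̇(t) < 0. -/
/-! The prefactor `σ₀ E₀² / (1 + (ω₀τ)²)` is positive. Once the transient `ω₀τ e^{-t/τ}` has
decayed, the bracket is essentially `sin θ - ω₀τ cos θ` with `θ = ω₀t`, which is negative for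
`0 < θ < arctan (ω₀τ)`, where `sin θ > 0`; such phases recur at arbitrarily late times
`t = (θ + 2πk) / ω₀`. -/

open Real Filter Topology

lemma exists_sin_pos_and_sin_lt_mul_cos {a : ℝ} (ha : 0 < a) :
    ∃ θ : ℝ, 0 < sin θ ∧ sin θ < a * cos θ := by
  have hroot : 0 < √(1 + (a / 2) ^ 2) := by positivity
  refine ⟨arctan (a / 2), ?_, ?_⟩
  · rw [sin_arctan]
    positivity
  · rw [sin_arctan, cos_arctan, mul_one_div]
    exact div_lt_div_of_pos_right (by linarith) hroot

lemma exists_sin_pos_and_transient_sub_mul_cos_add_sin_neg {g : ℝ → ℝ}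
    (hg : Tendsto g atTop (𝓝 0)) {ω a : ℝ} (hω : 0 < ω) (ha : 0 < a) :
    ∃ t : ℝ, 0 < t ∧ 0 < sin (ω * t) ∧ g t - a * cos (ω * t) + sin (ω * t) < 0 := by
  obtain ⟨θ, hsin, hsin_lt⟩ := exists_sin_pos_and_sin_lt_mul_cos ha
  set t : ℕ → ℝ := fun k => (θ + k * (2 * π)) / ω with ht_def
  have hωt (k : ℕ) : ω * t k = θ + k * (2 * π) := by
    rw [ht_def]
    field_simp
  have ht : Tendsto t atTop atTop :=
    (tendsto_atTop_add_const_left _ θ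
      (tendsto_natCast_atTop_atTop.atTop_mul_const two_pi_pos)).atTop_div_const hω
  have hlim : Tendsto (fun k => g (t k) - a * cos (ω * t k) + sin (ω * t k)) atTop
      (𝓝 (0 - a * cos θ + sin θ)) := by
    simp only [hωt, sin_add_nat_mul_two_pi, cos_add_nat_mul_two_pi]
    exact ((hg.comp ht).sub_const _).add_const _
  obtain ⟨k, hk_neg, hk_pos⟩ :=
    ((hlim.eventually (eventually_lt_nhds (show 0 - a * cos θ + sin θ < 0 by linarith))).and (ht.eventually_gt_atTop 0)).exists
  refine ⟨t k, hk_pos, ?_, hk_neg⟩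
  rwa [hωt, sin_add_nat_mul_two_pi]

lemma tendsto_const_mul_exp_neg_div_atTop (c : ℝ) {τ : ℝ} (hτ : 0 < τ) :
    Tendsto (fun t => c * exp (-t / τ)) atTop (𝓝 0) := by
  simpa only [neg_div, mul_zero, Function.comp_def, id] using
    (tendsto_exp_neg_atTop_nhds_zero.comp (tendsto_id.atTop_div_const hτ)).const_mul c

theorem entropy_production_rate_negative
    (σ₀ E₀ ω₀ τ : ℝ) (hσ : 0 < σ₀) (hE : 0 < E₀) (hω : 0 < ω₀) (hτ : 0 < τ) :
    ∃ t : ℝ, 0 < t ∧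
      (σ₀ * E₀ ^ 2 * Real.sin (ω₀ * t) / (1 + (ω₀ * τ) ^ 2)) *
        (ω₀ * τ * Real.exp (-t / τ) - ω₀ * τ * Real.cos (ω₀ * t) + Real.sin (ω₀ * t)) < 0 := by
  obtain ⟨t, ht, hsin, hbracket⟩ := exists_sin_pos_and_transient_sub_mul_cos_add_sin_neg
    (tendsto_const_mul_exp_neg_div_atTop (ω₀ * τ) hτ) hω (mul_pos hω hτ)
  refine ⟨t, ht, ?_⟩
  have hprefactor : 0 < σ₀ * E₀ ^ 2 / (1 + (ω₀ * τ) ^ 2) := by positivity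
  calc _ = σ₀ * E₀ ^ 2 / (1 + (ω₀ * τ) ^ 2) * (sin (ω₀ * t) *
          (ω₀ * τ * exp (-t / τ) - ω₀ * τ * cos (ω₀ * t) + sin (ω₀ * t))) := by ring
    _ < 0 := mul_neg_of_pos_of_neg hprefactor (mul_neg_of_pos_of_neg hsin hbracket)
end

section
/- For the asymptotic entropy production rate Σ̇(t) = σ₀E₀² sin(ω₀t)[−ω₀τ cos(ω₀t) + sin(ω₀t)] with σ₀, E₀, ω₀, τ > 0, for every positive integer n there exists t with ω₀t in any neighborhood of nπ such that Σ̇(t) < 0; concretely, Σ̇(t) < 0 whenever sin(ω₀t) is nonzero, sufficiently small, and sin(ω₀t)·cos(ω₀t) > 0 with |tan(ω₀t)| < ω₀τ. -/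
open Real

theorem asymptotic_epr_negative_near_multiples_of_pi
    (σ₀ E₀ ω₀ τ : ℝ) (hσ : 0 < σ₀) (hE : 0 < E₀) (hω : 0 < ω₀) (hτ : 0 < τ) :
    ∀ n : ℕ+, ∀ ε : ℝ, 0 < ε →
      ∃ t : ℝ, |ω₀ * t - (n : ℝ) * Real.pi| < ε ∧
        σ₀ * E₀ ^ 2 * Real.sin (ω₀ * t) *
          (Real.sin (ω₀ * t) - ω₀ * τ * Real.cos (ω₀ * t)) < 0 := by
  intro n ε hε
  have hπ := Real.pi_pos
  set δ : ℝ := min ε (min (Real.pi / 3) (ω₀ * τ)) / 2 with hδdef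
  have hδpos : 0 < δ := by
    apply div_pos _ two_pos
    exact lt_min hε (lt_min (by linarith) (by positivity))
  have hδε : δ < ε := by
    have : δ ≤ ε / 2 := by
      apply div_le_div_of_nonneg_right (min_le_left _ _) (by norm_num)
    linarith
  have hδπ3 : δ < Real.pi / 3 := by
    have : δ ≤ Real.pi / 3 / 2 := by
      apply div_le_div_of_nonneg_right (le_trans (min_le_right _ _) (min_le_left _ _)) (by norm_num)
    linarith
  have hδωτ : δ ≤ ω₀ * τ / 2 := by
    apply div_le_div_of_nonneg_right (le_trans (min_le_right _ _) (min_le_right _ _)) (by norm_num)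
  refine ⟨((n : ℝ) * Real.pi + δ) / ω₀, ?_, ?_⟩
  · rw [mul_div_cancel₀ _ hω.ne']
    simp [abs_of_pos hδpos, hδε]
  · rw [mul_div_cancel₀ _ hω.ne']
    have hsin : Real.sin ((n : ℝ) * Real.pi + δ) = (-1 : ℝ) ^ (n : ℕ) * Real.sin δ := by
      rw [add_comm, Real.sin_add_nat_mul_pi]
    have hcos : Real.cos ((n : ℝ) * Real.pi + δ) = (-1 : ℝ) ^ (n : ℕ) * Real.cos δ := by
      rw [add_comm, Real.cos_add_nat_mul_pi]
    rw [hsin, hcos]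
    have hsq : ((-1 : ℝ) ^ (n : ℕ)) ^ 2 = 1 := by
      rw [← pow_mul, mul_comm, pow_mul]; norm_num
    have hsinδ : 0 < Real.sin δ := Real.sin_pos_of_pos_of_lt_pi hδpos (by linarith)
    have hcosδ : (1 : ℝ) / 2 < Real.cos δ := by
      have := Real.cos_lt_cos_of_nonneg_of_le_pi (by positivity : (0:ℝ) ≤ δ) (by linarith) hδπ3
      rw [show Real.pi / 3 = Real.pi / 3 from rfl] at this
      have h3 : Real.cos (Real.pi / 3) = 1 / 2 := Real.cos_pi_div_three
      linarith
    have hsinlt : Real.sin δ < δ := Real.sin_lt hδpos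
    have hkey : Real.sin δ - ω₀ * τ * Real.cos δ < 0 := by
      have : ω₀ * τ / 2 < ω₀ * τ * Real.cos δ := by
        nlinarith [mul_pos hω hτ]
      linarith
    nlinarith [hsq, mul_pos (mul_pos hσ (pow_pos hE 2)) (mul_pos hsinδ (neg_pos.mpr hkey))]
end

section
/- For E(t) = E₀ sin(ω₀t) and the Drude-Sommerfeld response, the entropy production Σ(t) = ∫₀ᵗ Σ̇ dt' is nonnegative for all t ≥ 0, where Σ̇ is given by the explicit formula [σ₀E₀² sin(ω₀t')/(1+(ω₀τ)²)]·[ω₀τ e^{-t'/τ} − ω₀τ cos(ω₀t') + sin(ω₀t')]. -/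
/-!
Up to the factor `σ₀ E₀² / τ`, `Σ̇` is `E j` with `E s = sin (ω₀ s)` and `j = drudeResponse ω₀ τ`
the solution of `j' = E - j / τ`, `j 0 = 0`. Then `E j = (j² / 2)' + j² / τ`, so
`Σ(t) = j(t)² / 2 + ∫₀ᵗ j² / τ ≥ 0`.
-/

open Real intervalIntegral

theorem integral_mul_relaxation_response_nonneg {f h : ℝ → ℝ} {τ t : ℝ} (hτ : 0 < τ)
    (hf : Continuous f) (hh : ∀ s, HasDerivAt h (f s - h s / τ) s) (h0 : h 0 = 0)
    (ht : 0 ≤ t) : 0 ≤ ∫ s in (0 : ℝ)..t, f s * h s := by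
  have h_cont : Continuous h := continuous_iff_continuousAt.2 fun s => (hh s).continuousAt
  have h_power : Continuous fun s => h s * (f s - h s / τ) := by fun_prop
  have h_energy : ∫ s in (0 : ℝ)..t, h s * (f s - h s / τ) = h t ^ 2 / 2 := by
    rw [integral_eq_sub_of_hasDerivAt (f := fun s => h s ^ 2 / 2)
      (fun s _ => (((hh s).pow 2).div_const 2).congr_deriv (by ring))
      (h_power.intervalIntegrable _ _), h0]
    ring
  have h_dissipation : 0 ≤ ∫ s in (0 : ℝ)..t, h s ^ 2 / τ :=
    integral_nonneg ht fun s _ => by positivity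
  have h_split : ∀ s, f s * h s = h s * (f s - h s / τ) + h s ^ 2 / τ := fun s => by ring
  simp_rw [h_split]
  rw [integral_add (h_power.intervalIntegrable _ _)
    ((by fun_prop : Continuous fun s => h s ^ 2 / τ).intervalIntegrable _ _), h_energy]
  positivity

noncomputable def drudeResponse (ω τ s : ℝ) : ℝ :=
  τ * (sin (ω * s) - ω * τ * cos (ω * s) + ω * τ * exp (-s / τ)) / (1 + (ω * τ) ^ 2)

theorem drudeResponse_zero (ω τ : ℝ) : drudeResponse ω τ 0 = 0 := by
  simp [drudeResponse]

theorem hasDerivAt_drudeResponse {τ : ℝ} (hτ : τ ≠ 0) (ω s : ℝ) :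
    HasDerivAt (drudeResponse ω τ) (sin (ω * s) - drudeResponse ω τ s / τ) s := by
  have h_lin : HasDerivAt (fun x => ω * x) ω s := by
    simpa using (hasDerivAt_id s).const_mul ω
  have h_exp : HasDerivAt (fun x => exp (-x / τ)) (exp (-s / τ) * (-1 / τ)) s :=
    ((hasDerivAt_neg s).div_const τ).exp
  have h_deriv := ((((h_lin.sin).sub ((h_lin.cos).const_mul (ω * τ))).add
    (h_exp.const_mul (ω * τ))).const_mul τ).div_const (1 + (ω * τ) ^ 2)
  refine h_deriv.congr_deriv ?_
  unfold drudeResponse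
  field_simp
  ring

theorem drude_sommerfeld_entropy_production_nonneg_general
    (σ₀ E₀ ω₀ τ : ℝ) (hσ : 0 < σ₀) (hτ : 0 < τ)
    (t : ℝ) (ht : 0 ≤ t) :
    0 ≤ ∫ t' in (0 : ℝ)..t,
      (σ₀ * E₀ ^ 2 * Real.sin (ω₀ * t') / (1 + (ω₀ * τ) ^ 2)) *
        (ω₀ * τ * Real.exp (-t' / τ) - ω₀ * τ * Real.cos (ω₀ * t') + Real.sin (ω₀ * t')) := by
  have h_integrand : ∀ s, (σ₀ * E₀ ^ 2 * sin (ω₀ * s) / (1 + (ω₀ * τ) ^ 2)) *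
        (ω₀ * τ * exp (-s / τ) - ω₀ * τ * cos (ω₀ * s) + sin (ω₀ * s))
      = σ₀ * E₀ ^ 2 / τ * (sin (ω₀ * s) * drudeResponse ω₀ τ s) := fun s => by
    unfold drudeResponse
    field_simp
    ring
  simp_rw [h_integrand, integral_const_mul]
  have h_work := integral_mul_relaxation_response_nonneg hτ (by fun_prop)
    (hasDerivAt_drudeResponse hτ.ne' ω₀) (drudeResponse_zero ω₀ τ) ht
  positivity

theorem drude_sommerfeld_entropy_production_nonneg
    (σ₀ E₀ ω₀ τ : ℝ) (hσ : 0 < σ₀) (hE : 0 < E₀) (hω : 0 < ω₀) (hτ : 0 < τ)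
    (t : ℝ) (ht : 0 ≤ t) :
    0 ≤ ∫ t' in (0 : ℝ)..t,
      (σ₀ * E₀ ^ 2 * Real.sin (ω₀ * t') / (1 + (ω₀ * τ) ^ 2)) *
        (ω₀ * τ * Real.exp (-t' / τ) - ω₀ * τ * Real.cos (ω₀ * t') + Real.sin (ω₀ * t')) :=
  drude_sommerfeld_entropy_production_nonneg_general σ₀ E₀ ω₀ τ hσ hτ t ht
end
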